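/- arXiv:hep-th/9409058 — 2 statements merged into one kernel-verified Lean document; each statement's English description precedes it below -/
import Mathlib

section
/- Let R be an n⁴ complex array and m ≥ 2. Then: (i) if R is of real type I, conj(([1,m;R])^{j_1⋯j_m}_{i_1⋯i_m}) = ([1,m;R]^{op})^{i_1⋯i_m}_{j_1⋯j_m} for all multi-indices; (ii) if η is an invertible n×n matrix that is R-covariant, then Σ_{b_1,…,b_m} ([1,m;R])^{a_1⋯a_m}_{b_1⋯b_m} η^{b_1 i_1} ⋯ η^{b_m i_m} = Σ_{b_1,…,b_m} η^{a_1 b_1} ⋯ η^{a_m b_m} ([1,m;R₂₁]^{op})^{i_1⋯i_m}_{b_1⋯b_m}. -/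
open scoped ComplexConjugate

noncomputable section

/-- An n⁴ array `R^i{}_j{}^k{}_l` viewed as an n²×n² matrix with row index `(i,k)`,
column index `(j,l)`. -/
def toMat (n : ℕ) (R : Fin n → Fin n → Fin n → Fin n → ℂ) :
    Matrix (Fin n × Fin n) (Fin n × Fin n) ℂ :=
  Matrix.of fun p q => R p.1 q.1 p.2 q.2

/-- Entries `(R⁻¹)^i{}_j{}^k{}_l` of the matrix inverse of `R`. -/
def invEntry (n : ℕ) (R : Fin n → Fin n → Fin n → Fin n → ℂ)
    (i j k l : Fin n) : ℂ :=
  (toMat n R)⁻¹ (i, k) (j, l)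

/-- `R` is of real type I: `conj (R^i{}_j{}^k{}_l) = R^l{}_k{}^j{}_i`. -/
def RealTypeI (n : ℕ) (R : Fin n → Fin n → Fin n → Fin n → ℂ) : Prop :=
  ∀ i j k l, conj (R i j k l) = R l k j i

/-- `R` is of antireal type I: `R` invertible and
`conj (R^i{}_j{}^k{}_l) = (R⁻¹)^j{}_i{}^l{}_k`. -/
def AntirealTypeI (n : ℕ) (R : Fin n → Fin n → Fin n → Fin n → ℂ) : Prop :=
  IsUnit (toMat n R) ∧ ∀ i j k l, conj (R i j k l) = invEntry n R j i l k

/-- `R` is of real type II w.r.t. the involution `σ`: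
`conj (R^i{}_j{}^k{}_l) = R^{σk}{}_{σl}{}^{σi}{}_{σj}`. -/
def RealTypeII (n : ℕ) (R : Fin n → Fin n → Fin n → Fin n → ℂ)
    (σ : Fin n → Fin n) : Prop :=
  ∀ i j k l, conj (R i j k l) = R (σ k) (σ l) (σ i) (σ j)

/-- `R` is of antireal type II w.r.t. the involution `σ`: `R` invertible and
`conj (R^i{}_j{}^k{}_l) = (R⁻¹)^{σi}{}_{σj}{}^{σk}{}_{σl}`. -/
def AntirealTypeII (n : ℕ) (R : Fin n → Fin n → Fin n → Fin n → ℂ)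
    (σ : Fin n → Fin n) : Prop :=
  IsUnit (toMat n R) ∧
    ∀ i j k l, conj (R i j k l) = invEntry n R (σ i) (σ j) (σ k) (σ l)

/-- The metric `η` (entries `η^{ij} = η i j`) is `R`-covariant:
`Σ η^{ia} η^{jb} R^k{}_a{}^l{}_b = Σ R^i{}_a{}^j{}_b η^{ak} η^{bl}`. -/
def MetricCovariant (n : ℕ) (R : Fin n → Fin n → Fin n → Fin n → ℂ)
    (η : Matrix (Fin n) (Fin n) ℂ) : Prop :=
  ∀ i j k l, (∑ a : Fin n, ∑ b : Fin n, η i a * η j b * R k a l b) =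
    ∑ a : Fin n, ∑ b : Fin n, R i a j b * η a k * η b l

/-- The metric `η` is real: `conj (η^{ij}) = η_{ji}`, where the lower-index entries
`η_{ij}` are those of the transposed inverse, i.e. `η_{ji} = (η⁻¹) i j`. -/
def MetricReal (n : ℕ) (η : Matrix (Fin n) (Fin n) ℂ) : Prop :=
  ∀ i j, conj (η i j) = η⁻¹ i j

/-- The matrix `PR` on ℂⁿ⊗ℂⁿ: `(PR)^i{}_j{}^k{}_l = R^k{}_j{}^i{}_l`. -/
def PRmat (n : ℕ) (R : Fin n → Fin n → Fin n → Fin n → ℂ) :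
    Matrix (Fin n × Fin n) (Fin n × Fin n) ℂ :=
  Matrix.of fun p q => R p.2 q.1 p.1 q.2

/-- The matrix `A_{k+1,k+2}` on `(ℂⁿ)^{⊗m}` acting as the two-site matrix `A` in the
(0-indexed) tensor factors `k, k+1` and as the identity elsewhere (the identity
matrix if `k+1 ≥ m`). -/
def site (n m : ℕ) (A : Matrix (Fin n × Fin n) (Fin n × Fin n) ℂ) (k : ℕ) :
    Matrix (Fin m → Fin n) (Fin m → Fin n) ℂ :=
  if h : k + 1 < m then
    Matrix.of fun f g =>
      A (f ⟨k, Nat.lt_of_succ_lt h⟩, f ⟨k + 1, h⟩)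
        (g ⟨k, Nat.lt_of_succ_lt h⟩, g ⟨k + 1, h⟩) *
      ∏ t : Fin m,
        (if t.1 = k ∨ t.1 = k + 1 then (1 : ℂ) else if f t = g t then 1 else 0)
  else 1

/-- The ordered product `A_{off+1,off+2} A_{off+2,off+3} ⋯ A_{off+r,off+r+1}`
(1-indexed tensor positions) on `(ℂⁿ)^{⊗m}`; the identity for `r = 0`. -/
def chain (n m : ℕ) (A : Matrix (Fin n × Fin n) (Fin n × Fin n) ℂ)
    (off r : ℕ) : Matrix (Fin m → Fin n) (Fin m → Fin n) ℂ :=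
  ((List.range r).map fun s => site n m A (off + s)).prod

/-- The reversed ordered product `A_{off+r,off+r+1} ⋯ A_{off+2,off+3} A_{off+1,off+2}`
on `(ℂⁿ)^{⊗m}`; the identity for `r = 0`. -/
def chainOp (n m : ℕ) (A : Matrix (Fin n × Fin n) (Fin n × Fin n) ℂ)
    (off r : ℕ) : Matrix (Fin m → Fin n) (Fin m → Fin n) ℂ :=
  (((List.range r).reverse).map fun s => site n m A (off + s)).prod

/-- The braided integer `[k;R]` acting in the tensor factors `off+1,…,off+k`
(1-indexed) of `(ℂⁿ)^{⊗m}`: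
`[k;R] = Σ_{r=0}^{k−1} (PR)_{12}(PR)_{23}⋯(PR)_{r,r+1}` (shifted by `off`). -/
def braidedInt (n m : ℕ) (R : Fin n → Fin n → Fin n → Fin n → ℂ)
    (off k : ℕ) : Matrix (Fin m → Fin n) (Fin m → Fin n) ℂ :=
  ∑ r ∈ Finset.range k, chain n m (PRmat n R) off r

/-- The opposite braided integer `[k;R]^{op}` acting in the tensor factors
`off+1,…,off+k` of `(ℂⁿ)^{⊗m}`:
`[k;R]^{op} = Σ_{r=0}^{k−1} (PR)_{r,r+1}⋯(PR)_{23}(PR)_{12}` (shifted by `off`). -/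
def braidedIntOp (n m : ℕ) (R : Fin n → Fin n → Fin n → Fin n → ℂ)
    (off k : ℕ) : Matrix (Fin m → Fin n) (Fin m → Fin n) ℂ :=
  ∑ r ∈ Finset.range k, chainOp n m (PRmat n R) off r

/-- The braided factorial `[m;R]! = [2;R]_{m−1,m} [3;R]_{m−2,…,m} ⋯ [m;R]_{1,…,m}`
on `(ℂⁿ)^{⊗m}`. -/
def braidedFact (n m : ℕ) (R : Fin n → Fin n → Fin n → Fin n → ℂ) :
    Matrix (Fin m → Fin n) (Fin m → Fin n) ℂ :=
  ((List.range (m - 1)).map fun t => braidedInt n m R (m - (t + 2)) (t + 2)).prod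

/-- The opposite braided factorial
`[m;R]^{op}! = [m;R]^{op}_{1,…,m} ⋯ [3;R]^{op}_{m−2,…,m} [2;R]^{op}_{m−1,m}`. -/
def braidedFactOp (n m : ℕ) (R : Fin n → Fin n → Fin n → Fin n → ℂ) :
    Matrix (Fin m → Fin n) (Fin m → Fin n) ℂ :=
  (((List.range (m - 1)).reverse).map fun t =>
    braidedIntOp n m R (m - (t + 2)) (t + 2)).prod

/-- `R₁₂` on ℂⁿ⊗ℂⁿ⊗ℂⁿ. -/
def Rmat12 (n : ℕ) (R : Fin n → Fin n → Fin n → Fin n → ℂ) :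
    Matrix (Fin n × Fin n × Fin n) (Fin n × Fin n × Fin n) ℂ :=
  Matrix.of fun p q =>
    R p.1 q.1 p.2.1 q.2.1 * (if p.2.2 = q.2.2 then 1 else 0)

/-- `R₁₃` on ℂⁿ⊗ℂⁿ⊗ℂⁿ. -/
def Rmat13 (n : ℕ) (R : Fin n → Fin n → Fin n → Fin n → ℂ) :
    Matrix (Fin n × Fin n × Fin n) (Fin n × Fin n × Fin n) ℂ :=
  Matrix.of fun p q =>
    R p.1 q.1 p.2.2 q.2.2 * (if p.2.1 = q.2.1 then 1 else 0)

/-- `R₂₃` on ℂⁿ⊗ℂⁿ⊗ℂⁿ. -/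
def Rmat23 (n : ℕ) (R : Fin n → Fin n → Fin n → Fin n → ℂ) :
    Matrix (Fin n × Fin n × Fin n) (Fin n × Fin n × Fin n) ℂ :=
  Matrix.of fun p q =>
    (if p.1 = q.1 then (1 : ℂ) else 0) * R p.2.1 q.2.1 p.2.2 q.2.2

/-- The quantum Yang–Baxter equation `R₁₂R₁₃R₂₃ = R₂₃R₁₃R₁₂`. -/
def QYBE (n : ℕ) (R : Fin n → Fin n → Fin n → Fin n → ℂ) : Prop :=
  Rmat12 n R * Rmat13 n R * Rmat23 n R = Rmat23 n R * Rmat13 n R * Rmat12 n R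

/-- The array `R₂₁`, with `R₂₁^i{}_j{}^k{}_l = R^k{}_l{}^i{}_j`. -/
def swapR (n : ℕ) (R : Fin n → Fin n → Fin n → Fin n → ℂ) :
    Fin n → Fin n → Fin n → Fin n → ℂ :=
  fun i j k l => R k l i j

/-! Both matrices are ordered products of the two-site operators `(PR)_{k,k+1}`.
Real type I says precisely that `PR` is Hermitian, so taking adjoints reverses the product.
Covariance of `η` says `PR (η ⊗ η) = (η ⊗ η) (PR₂₁)ᵀ` on two sites; since `η^{⊗m}` acts
factorwise, each `(PR)_{k,k+1}` is intertwined with `((PR₂₁)ᵀ)_{k,k+1}` by `η^{⊗m}`, hence so is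
the product, and a product of transposes is the transpose of the opposite product. -/

open Finset Function Matrix
open scoped Kronecker

section LocalMatrix

variable {ι α 𝕜 : Type*} [Fintype ι] [DecidableEq ι]

lemma prod_apply_update_update {M : Type*} [CommMonoid M] {K K₁ : ι} (hK : K ≠ K₁)
    (φ : ι → α → M) (f : ι → α) (a b : α) :
    ∏ t, φ t (update (update f K a) K₁ b t) =
      φ K a * φ K₁ b * ∏ t ∈ (univ.erase K).erase K₁, φ t (f t) := by
  rw [← mul_prod_erase univ _ (mem_univ K),
    ← mul_prod_erase _ _ (mem_erase.2 ⟨hK.symm, mem_univ K₁⟩), mul_assoc]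
  simp only [update_self, update_of_ne hK]
  congr 2
  refine prod_congr rfl fun t ht => ?_
  simp only [mem_erase, ne_eq] at ht
  rw [update_of_ne ht.1, update_of_ne ht.2.1]

variable [DecidableEq α] [CommSemiring 𝕜]

def localMat (A : Matrix (α × α) (α × α) 𝕜) (K K₁ : ι) : Matrix (ι → α) (ι → α) 𝕜 :=
  of fun f g => A (f K, f K₁) (g K, g K₁) * if ∀ t, t ≠ K → t ≠ K₁ → f t = g t then 1 else 0

def tensorPow (η : Matrix α α 𝕜) : Matrix (ι → α) (ι → α) 𝕜 :=
  of fun f g => ∏ t, η (f t) (g t)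

lemma localMat_transpose (A : Matrix (α × α) (α × α) 𝕜) (K K₁ : ι) :
    (localMat A K K₁)ᵀ = localMat Aᵀ K K₁ := by
  ext f g
  simp [localMat, eq_comm]

lemma localMat_conjTranspose [StarRing 𝕜] (A : Matrix (α × α) (α × α) 𝕜) (K K₁ : ι) :
    (localMat A K K₁)ᴴ = localMat Aᴴ K K₁ := by
  ext f g
  simp only [conjTranspose_apply, localMat, of_apply, star_mul', apply_ite star, star_one,
    star_zero]
  simp only [eq_comm]

variable [Fintype α]

lemma sum_ite_agree_off_pair {M : Type*} [AddCommMonoid M] {K K₁ : ι} (hK : K ≠ K₁)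
    (f : ι → α) (F : (ι → α) → M) :
    ∑ g, (if ∀ t, t ≠ K → t ≠ K₁ → f t = g t then F g else 0) =
      ∑ a, ∑ b, F (update (update f K a) K₁ b) := by
  have hrebuild : ∀ g ∈ univ.filter fun g => ∀ t, t ≠ K → t ≠ K₁ → f t = g t,
      update (update f K (g K)) K₁ (g K₁) = g := by
    intro g hg
    simp only [mem_filter, mem_univ, true_and] at hg
    ext t
    by_cases h₁ : t = K₁
    · simp [h₁]
    by_cases h : t = K
    · simp [h, update_of_ne hK]
    · simp [update_of_ne h, update_of_ne h₁, hg t h h₁]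
  rw [← sum_filter, ← Fintype.sum_prod_type']
  exact sum_nbij' (fun g => (g K, g K₁)) (fun p => update (update f K p.1) K₁ p.2)
    (by simp) (by simp +contextual [update_of_ne]) hrebuild (by simp [update_of_ne hK])
    (fun g hg => by rw [hrebuild g hg])

lemma localMat_mul_apply {K K₁ : ι} (hK : K ≠ K₁) (A : Matrix (α × α) (α × α) 𝕜)
    (N : Matrix (ι → α) (ι → α) 𝕜) (f i : ι → α) :
    (localMat A K K₁ * N) f i =
      ∑ a, ∑ b, A (f K, f K₁) (a, b) * N (update (update f K a) K₁ b) i := by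
  simp only [mul_apply, localMat, of_apply, mul_assoc, ite_mul, one_mul, zero_mul, mul_ite,
    mul_zero]
  rw [sum_ite_agree_off_pair hK f]
  simp [update_of_ne hK]

lemma mul_localMat_apply {K K₁ : ι} (hK : K ≠ K₁) (A : Matrix (α × α) (α × α) 𝕜)
    (N : Matrix (ι → α) (ι → α) 𝕜) (f i : ι → α) :
    (N * localMat A K K₁) f i =
      ∑ a, ∑ b, N f (update (update i K a) K₁ b) * A (a, b) (i K, i K₁) := by
  rw [← transpose_apply (N * _), transpose_mul, localMat_transpose, localMat_mul_apply hK]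
  simp [mul_comm]

lemma localMat_mul_tensorPow_comm {K K₁ : ι} (hK : K ≠ K₁) {A B : Matrix (α × α) (α × α) 𝕜}
    {η : Matrix α α 𝕜} (hAB : A * (η ⊗ₖ η) = (η ⊗ₖ η) * B) :
    localMat A K K₁ * tensorPow η = tensorPow η * localMat B K K₁ := by
  ext f i
  have hpair := Matrix.ext_iff.2 hAB (f K, f K₁) (i K, i K₁)
  simp only [mul_apply, Fintype.sum_prod_type, kronecker_apply] at hpair
  rw [localMat_mul_apply hK, mul_localMat_apply hK]
  simp only [tensorPow, of_apply, prod_apply_update_update hK (fun t x => η x (i t)),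
    prod_apply_update_update hK (fun t x => η (f t) x)]
  set C := ∏ t ∈ (univ.erase K).erase K₁, η (f t) (i t)
  calc _ = (∑ x, ∑ y, A (f K, f K₁) (x, y) * (η x (i K) * η y (i K₁))) * C := by
        simp only [sum_mul, mul_assoc]
    _ = (∑ x, ∑ y, η (f K) x * η (f K₁) y * B (x, y) (i K, i K₁)) * C := by rw [hpair]
    _ = _ := by simp only [sum_mul, mul_right_comm _ C]

end LocalMatrix

section Site

variable {n m : ℕ}

lemma site_eq_localMat (A : Matrix (Fin n × Fin n) (Fin n × Fin n) ℂ) {k : ℕ}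
    (hk : k + 1 < m) :
    site n m A k = localMat A ⟨k, by omega⟩ ⟨k + 1, hk⟩ := by
  ext f g
  rw [site, dif_pos hk, of_apply, localMat, of_apply]
  congr 1
  have hfactor : ∀ t : Fin m,
      (if t.1 = k ∨ t.1 = k + 1 then (1 : ℂ) else if f t = g t then 1 else 0) =
        if (t.1 = k ∨ t.1 = k + 1) ∨ f t = g t then 1 else 0 := fun t => by
    by_cases h : t.1 = k ∨ t.1 = k + 1 <;> simp [h]
  simp only [hfactor, Fintype.prod_boole]
  congr 1
  refine propext (forall_congr' fun t => ?_)
  simp only [ne_eq, Fin.ext_iff]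
  tauto

lemma site_transpose (A : Matrix (Fin n × Fin n) (Fin n × Fin n) ℂ) (k : ℕ) :
    (site n m A k)ᵀ = site n m Aᵀ k := by
  by_cases hk : k + 1 < m
  · rw [site_eq_localMat _ hk, site_eq_localMat _ hk, localMat_transpose]
  · simp [site, hk]

lemma site_conjTranspose (A : Matrix (Fin n × Fin n) (Fin n × Fin n) ℂ) (k : ℕ) :
    (site n m A k)ᴴ = site n m Aᴴ k := by
  by_cases hk : k + 1 < m
  · rw [site_eq_localMat _ hk, site_eq_localMat _ hk, localMat_conjTranspose]
  · simp [site, hk]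

lemma site_mul_tensorPow_comm {A B : Matrix (Fin n × Fin n) (Fin n × Fin n) ℂ}
    {η : Matrix (Fin n) (Fin n) ℂ} (hAB : A * (η ⊗ₖ η) = (η ⊗ₖ η) * B) (k : ℕ) :
    site n m A k * tensorPow η = tensorPow η * site n m B k := by
  by_cases hk : k + 1 < m
  · rw [site_eq_localMat _ hk, site_eq_localMat _ hk]
    exact localMat_mul_tensorPow_comm (by simp [Fin.ext_iff]) hAB
  · simp [site, hk]

lemma chain_succ (A : Matrix (Fin n × Fin n) (Fin n × Fin n) ℂ) (off r : ℕ) :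
    chain n m A off (r + 1) = chain n m A off r * site n m A (off + r) := by
  simp [chain, List.range_succ]

lemma chain_mul_comm {A B : Matrix (Fin n × Fin n) (Fin n × Fin n) ℂ}
    {M : Matrix (Fin m → Fin n) (Fin m → Fin n) ℂ}
    (h : ∀ k, site n m A k * M = M * site n m B k) (off r : ℕ) :
    chain n m A off r * M = M * chain n m B off r := by
  induction r with
  | zero => simp [chain]
  | succ r ih => rw [chain_succ, chain_succ, mul_assoc, h, ← mul_assoc, ih, mul_assoc]

lemma chainOp_transpose (A : Matrix (Fin n × Fin n) (Fin n × Fin n) ℂ) (off r : ℕ) :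
    (chainOp n m A off r)ᵀ = chain n m Aᵀ off r := by
  simp [chainOp, chain, transpose_list_prod, Function.comp_def, site_transpose]

lemma chain_conjTranspose (A : Matrix (Fin n × Fin n) (Fin n × Fin n) ℂ) (off r : ℕ) :
    (chain n m A off r)ᴴ = chainOp n m Aᴴ off r := by
  simp [chainOp, chain, conjTranspose_list_prod, Function.comp_def, site_conjTranspose]

end Site

section RMatrix

variable {n : ℕ} {R : Fin n → Fin n → Fin n → Fin n → ℂ}

lemma RealTypeI.PRmat_conjTranspose (hR : RealTypeI n R) : (PRmat n R)ᴴ = PRmat n R := by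
  ext p q
  exact hR q.2 p.1 q.1 p.2

lemma MetricCovariant.PRmat_mul_kronecker {η : Matrix (Fin n) (Fin n) ℂ}
    (hη : MetricCovariant n R η) :
    PRmat n R * (η ⊗ₖ η) = (η ⊗ₖ η) * (PRmat n (swapR n R))ᵀ := by
  ext ⟨c, d⟩ ⟨u, v⟩
  simp only [mul_apply, Fintype.sum_prod_type, kronecker_apply, transpose_apply, PRmat, swapR,
    of_apply]
  calc _ = ∑ x, ∑ y, R d x c y * η x u * η y v := by simp only [mul_assoc]
    _ = ∑ x, ∑ y, η d x * η c y * R u x v y := (hη d c u v).symm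
    _ = _ := by
      rw [sum_comm]
      exact sum_congr rfl fun _ _ => sum_congr rfl fun _ _ => by ring

end RMatrix

theorem stmt18_general (n : ℕ)
    (R : Fin n → Fin n → Fin n → Fin n → ℂ)
    (m : ℕ) :
    (RealTypeI n R →
      ∀ j i : Fin m → Fin n,
        conj (chain n m (PRmat n R) 0 (m - 1) j i) =
          chainOp n m (PRmat n R) 0 (m - 1) i j) ∧
    (∀ η : Matrix (Fin n) (Fin n) ℂ, IsUnit η → MetricCovariant n R η →
      ∀ a i : Fin m → Fin n,
        (∑ b : Fin m → Fin n,
          chain n m (PRmat n R) 0 (m - 1) a b * ∏ t : Fin m, η (b t) (i t)) =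
        ∑ b : Fin m → Fin n,
          (∏ t : Fin m, η (a t) (b t)) *
            chainOp n m (PRmat n (swapR n R)) 0 (m - 1) i b) := by
  refine ⟨fun hR j i => ?_, fun η _ hη a i => ?_⟩
  · have hadj := chain_conjTranspose (m := m) (PRmat n R) 0 (m - 1)
    rw [hR.PRmat_conjTranspose] at hadj
    rw [← hadj, conjTranspose_apply]
    rfl
  · have hcomm :=
      chain_mul_comm (site_mul_tensorPow_comm (m := m) hη.PRmat_mul_kronecker) 0 (m - 1)
    have hentry := Matrix.ext_iff.2 hcomm a i
    rwa [mul_apply, mul_apply, ← chainOp_transpose] at hentry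

/-- for `m ≥ 2`: (i) if `R` is of real type I, then
`conj(([1,m;R])^{j_1⋯j_m}_{i_1⋯i_m}) = ([1,m;R]^{op})^{i_1⋯i_m}_{j_1⋯j_m}`;
(ii) if `η` is an invertible `R`-covariant matrix, then
`Σ_b ([1,m;R])^{a}_{b} η^{b_1 i_1}⋯η^{b_m i_m}
 = Σ_b η^{a_1 b_1}⋯η^{a_m b_m} ([1,m;R₂₁]^{op})^{i}_{b}`.
Here `[1,m;R] = (PR)_{12}⋯(PR)_{m−1,m}` and `[1,m;R]^{op} = (PR)_{m−1,m}⋯(PR)_{12}`. -/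
theorem stmt18 (n : ℕ) (hn : 1 ≤ n)
    (R : Fin n → Fin n → Fin n → Fin n → ℂ)
    (m : ℕ) (hm : 2 ≤ m) :
    (RealTypeI n R →
      ∀ j i : Fin m → Fin n,
        conj (chain n m (PRmat n R) 0 (m - 1) j i) =
          chainOp n m (PRmat n R) 0 (m - 1) i j) ∧
    (∀ η : Matrix (Fin n) (Fin n) ℂ, IsUnit η → MetricCovariant n R η →
      ∀ a i : Fin m → Fin n,
        (∑ b : Fin m → Fin n,
          chain n m (PRmat n R) 0 (m - 1) a b * ∏ t : Fin m, η (b t) (i t)) =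
        ∑ b : Fin m → Fin n,
          (∏ t : Fin m, η (a t) (b t)) *
            chainOp n m (PRmat n (swapR n R)) 0 (m - 1) i b) :=
  stmt18_general n R m
end
end

section
/- Let R′ be an n⁴ complex array and let η be an invertible n×n matrix that is R′-covariant. Then there is a (necessarily unique) ℂ-algebra isomorphism from the braided vector algebra V(R′,R) onto the braided covector algebra V̌(R′,R) sending v^i to Σ_a x_a η^{ai} for all i = 1,…,n. -/
open scoped ComplexConjugate

noncomputable section

/-- The relations `x_i x_j = Σ_{a,b} R'^a{}_i{}^b{}_j x_b x_a` of the braided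
covector algebra, as a relation on the free algebra. -/
inductive CovRel (n : ℕ) (R' : Fin n → Fin n → Fin n → Fin n → ℂ) :
    FreeAlgebra ℂ (Fin n) → FreeAlgebra ℂ (Fin n) → Prop
  | rel (i j : Fin n) :
      CovRel n R' (FreeAlgebra.ι ℂ i * FreeAlgebra.ι ℂ j)
        (∑ a : Fin n, ∑ b : Fin n,
          R' a i b j • (FreeAlgebra.ι ℂ b * FreeAlgebra.ι ℂ a))

/-- The braided covector algebra `V̌(R',R)`: the free algebra on `x_1,…,x_n` modulo
the two-sided ideal generated by `x_i x_j − Σ R'^a{}_i{}^b{}_j x_b x_a`. -/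
abbrev CovAlg (n : ℕ) (R' : Fin n → Fin n → Fin n → Fin n → ℂ) :=
  RingQuot (CovRel n R')

/-- The generator `x_i` of the braided covector algebra. -/
def xg (n : ℕ) (R' : Fin n → Fin n → Fin n → Fin n → ℂ) (i : Fin n) :
    CovAlg n R' :=
  RingQuot.mkAlgHom ℂ (CovRel n R') (FreeAlgebra.ι ℂ i)

/-- The relations `v^i v^j = Σ_{a,b} R'^i{}_a{}^j{}_b v^b v^a` of the braided
vector algebra, as a relation on the free algebra. -/
inductive VecRel (n : ℕ) (R' : Fin n → Fin n → Fin n → Fin n → ℂ) :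
    FreeAlgebra ℂ (Fin n) → FreeAlgebra ℂ (Fin n) → Prop
  | rel (i j : Fin n) :
      VecRel n R' (FreeAlgebra.ι ℂ i * FreeAlgebra.ι ℂ j)
        (∑ a : Fin n, ∑ b : Fin n,
          R' i a j b • (FreeAlgebra.ι ℂ b * FreeAlgebra.ι ℂ a))

/-- The braided vector algebra `V(R',R)`: the free algebra on `v^1,…,v^n` modulo
the two-sided ideal generated by `v^i v^j − Σ R'^i{}_a{}^j{}_b v^b v^a`. -/
abbrev VecAlg (n : ℕ) (R' : Fin n → Fin n → Fin n → Fin n → ℂ) :=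
  RingQuot (VecRel n R')

/-- The generator `v^i` of the braided vector algebra. -/
def vg (n : ℕ) (R' : Fin n → Fin n → Fin n → Fin n → ℂ) (i : Fin n) :
    VecAlg n R' :=
  RingQuot.mkAlgHom ℂ (VecRel n R') (FreeAlgebra.ι ℂ i)

/-- The relations of the braided tensor square of the braided covector algebra:
generators `x_i = ι (inl i)`, `y_i = ι (inr i)`, with `x`- and `y`-relations from
`R'` and cross relations `y_i x_j = Σ_{a,b} R^a{}_i{}^b{}_j x_b y_a`. -/
inductive SqRel (n : ℕ) (R' R : Fin n → Fin n → Fin n → Fin n → ℂ) :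
    FreeAlgebra ℂ (Fin n ⊕ Fin n) → FreeAlgebra ℂ (Fin n ⊕ Fin n) → Prop
  | xx (i j : Fin n) :
      SqRel n R' R (FreeAlgebra.ι ℂ (Sum.inl i) * FreeAlgebra.ι ℂ (Sum.inl j))
        (∑ a : Fin n, ∑ b : Fin n, R' a i b j •
          (FreeAlgebra.ι ℂ (Sum.inl b) * FreeAlgebra.ι ℂ (Sum.inl a)))
  | yy (i j : Fin n) :
      SqRel n R' R (FreeAlgebra.ι ℂ (Sum.inr i) * FreeAlgebra.ι ℂ (Sum.inr j))
        (∑ a : Fin n, ∑ b : Fin n, R' a i b j •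
          (FreeAlgebra.ι ℂ (Sum.inr b) * FreeAlgebra.ι ℂ (Sum.inr a)))
  | yx (i j : Fin n) :
      SqRel n R' R (FreeAlgebra.ι ℂ (Sum.inr i) * FreeAlgebra.ι ℂ (Sum.inl j))
        (∑ a : Fin n, ∑ b : Fin n, R a i b j •
          (FreeAlgebra.ι ℂ (Sum.inl b) * FreeAlgebra.ι ℂ (Sum.inr a)))

/-- The braided tensor square `B` of the braided covector algebra. -/
abbrev SqAlg (n : ℕ) (R' R : Fin n → Fin n → Fin n → Fin n → ℂ) :=
  RingQuot (SqRel n R' R)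

/-- The generator `x_i` of the braided tensor square. -/
def Xg (n : ℕ) (R' R : Fin n → Fin n → Fin n → Fin n → ℂ) (i : Fin n) :
    SqAlg n R' R :=
  RingQuot.mkAlgHom ℂ (SqRel n R' R) (FreeAlgebra.ι ℂ (Sum.inl i))

/-- The generator `y_i` of the braided tensor square. -/
def Yg (n : ℕ) (R' R : Fin n → Fin n → Fin n → Fin n → ℂ) (i : Fin n) :
    SqAlg n R' R :=
  RingQuot.mkAlgHom ℂ (SqRel n R' R) (FreeAlgebra.ι ℂ (Sum.inr i))

/-- A conjugate-linear, antimultiplicative, unital map between ℂ-algebras. -/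
def IsConjLinearAntiHom {A B : Type*} [Semiring A] [Algebra ℂ A]
    [Semiring B] [Algebra ℂ B] (f : A → B) : Prop :=
  (∀ a b : A, f (a + b) = f a + f b) ∧
  (∀ (c : ℂ) (a : A), f (c • a) = (starRingEnd ℂ) c • f a) ∧
  (∀ a b : A, f (a * b) = f b * f a) ∧
  f 1 = 1

/-- A star structure on a ℂ-algebra: a conjugate-linear, antimultiplicative,
unital, involutive map. -/
def IsStarStructure {A : Type*} [Semiring A] [Algebra ℂ A] (f : A → A) : Prop :=
  (∀ a b : A, f (a + b) = f a + f b) ∧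
  (∀ (c : ℂ) (a : A), f (c • a) = (starRingEnd ℂ) c • f a) ∧
  (∀ a b : A, f (a * b) = f b * f a) ∧
  f 1 = 1 ∧
  (∀ a : A, f (f a) = a)


section Stmt19Aux

open Kronecker

/-- Swap a quadruple sum with smul coefficients. -/
lemma stmt19_sum_swap {n : ℕ} {A : Type*} [AddCommMonoid A] [Module ℂ A]
    (f : Fin n → Fin n → Fin n → Fin n → ℂ) (m : Fin n → Fin n → A) :
    (∑ a : Fin n, ∑ b : Fin n, ∑ c : Fin n, ∑ d : Fin n, f a b c d • m c d) =
      ∑ c : Fin n, ∑ d : Fin n, (∑ a : Fin n, ∑ b : Fin n, f a b c d) • m c d := by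
  have key : ∀ (g : Fin n → Fin n → Fin n → Fin n → A),
      (∑ a : Fin n, ∑ b : Fin n, ∑ c : Fin n, ∑ d : Fin n, g a b c d) =
        ∑ c : Fin n, ∑ d : Fin n, ∑ a : Fin n, ∑ b : Fin n, g a b c d := by
    intro g
    calc (∑ a : Fin n, ∑ b : Fin n, ∑ c : Fin n, ∑ d : Fin n, g a b c d)
        = ∑ a : Fin n, ∑ c : Fin n, ∑ b : Fin n, ∑ d : Fin n, g a b c d :=
          Finset.sum_congr rfl fun a _ => Finset.sum_comm
      _ = ∑ c : Fin n, ∑ a : Fin n, ∑ b : Fin n, ∑ d : Fin n, g a b c d :=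
          Finset.sum_comm
      _ = ∑ c : Fin n, ∑ a : Fin n, ∑ d : Fin n, ∑ b : Fin n, g a b c d :=
          Finset.sum_congr rfl fun c _ => Finset.sum_congr rfl fun a _ =>
            Finset.sum_comm
      _ = ∑ c : Fin n, ∑ d : Fin n, ∑ a : Fin n, ∑ b : Fin n, g a b c d :=
          Finset.sum_congr rfl fun c _ => Finset.sum_comm
  rw [key]
  simp only [Finset.sum_smul]

/-- Generic expansion lemma: transporting quadratic relations along a linear
change of generators. -/
lemma stmt19_expand {n : ℕ} {A : Type*} [Ring A] [Algebra ℂ A] (w : Fin n → A)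
    (S T : Fin n → Fin n → Fin n → Fin n → ℂ) (ζ : Matrix (Fin n) (Fin n) ℂ)
    (hw : ∀ i j, w i * w j = ∑ a : Fin n, ∑ b : Fin n, S i a j b • (w b * w a))
    (hc : ∀ i j c d, (∑ a : Fin n, ∑ b : Fin n, ζ a i * ζ b j * S a d b c) =
      ∑ a : Fin n, ∑ b : Fin n, T i a j b * (ζ c b * ζ d a))
    (i j : Fin n) :
    (∑ a : Fin n, ζ a i • w a) * (∑ b : Fin n, ζ b j • w b) =
      ∑ a : Fin n, ∑ b : Fin n, T i a j b •
        ((∑ c : Fin n, ζ c b • w c) * (∑ d : Fin n, ζ d a • w d)) := by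
  have hL : (∑ a : Fin n, ζ a i • w a) * (∑ b : Fin n, ζ b j • w b)
      = ∑ a : Fin n, ∑ b : Fin n, ∑ c : Fin n, ∑ d : Fin n,
          (ζ a i * ζ b j * S a c b d) • (w d * w c) := by
    rw [Finset.sum_mul]
    refine Finset.sum_congr rfl fun a _ => ?_
    rw [Finset.mul_sum]
    refine Finset.sum_congr rfl fun b _ => ?_
    rw [smul_mul_smul_comm, hw a b, Finset.smul_sum]
    refine Finset.sum_congr rfl fun c _ => ?_
    rw [Finset.smul_sum]
    refine Finset.sum_congr rfl fun d _ => ?_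
    rw [smul_smul]
  have hR : (∑ a : Fin n, ∑ b : Fin n, T i a j b •
        ((∑ c : Fin n, ζ c b • w c) * (∑ d : Fin n, ζ d a • w d)))
      = ∑ a : Fin n, ∑ b : Fin n, ∑ c : Fin n, ∑ d : Fin n,
          (T i a j b * (ζ c b * ζ d a)) • (w c * w d) := by
    refine Finset.sum_congr rfl fun a _ => Finset.sum_congr rfl fun b _ => ?_
    rw [Finset.sum_mul, Finset.smul_sum]
    refine Finset.sum_congr rfl fun c _ => ?_
    rw [Finset.mul_sum, Finset.smul_sum]
    refine Finset.sum_congr rfl fun d _ => ?_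
    rw [smul_mul_smul_comm, smul_smul]
  rw [hL, hR, stmt19_sum_swap, stmt19_sum_swap, Finset.sum_comm]
  refine Finset.sum_congr rfl fun c _ => Finset.sum_congr rfl fun d _ => ?_
  rw [hc i j c d]

/-- Coefficient identity needed for the forward map. -/
lemma stmt19_hcF {n : ℕ} (R' : Fin n → Fin n → Fin n → Fin n → ℂ)
    (η : Matrix (Fin n) (Fin n) ℂ) (hcov : MetricCovariant n R' η)
    (i j c d : Fin n) :
    (∑ a : Fin n, ∑ b : Fin n, η a i * η b j * R' d a c b) =
      ∑ a : Fin n, ∑ b : Fin n, R' i a j b * (η c b * η d a) := by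
  have h := hcov d c i j
  calc (∑ a : Fin n, ∑ b : Fin n, η a i * η b j * R' d a c b)
      = ∑ a : Fin n, ∑ b : Fin n, R' d a c b * η a i * η b j :=
        Finset.sum_congr rfl fun a _ => Finset.sum_congr rfl fun b _ => by ring
    _ = ∑ a : Fin n, ∑ b : Fin n, η d a * η c b * R' i a j b := h.symm
    _ = ∑ a : Fin n, ∑ b : Fin n, R' i a j b * (η c b * η d a) :=
        Finset.sum_congr rfl fun a _ => Finset.sum_congr rfl fun b _ => by ring

/-- Coefficient identity needed for the inverse map. -/
lemma stmt19_hcG {n : ℕ} (R' : Fin n → Fin n → Fin n → Fin n → ℂ)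
    (η : Matrix (Fin n) (Fin n) ℂ) (hη : IsUnit η)
    (hcov : MetricCovariant n R' η) (i j c d : Fin n) :
    (∑ a : Fin n, ∑ b : Fin n, η⁻¹ a i * η⁻¹ b j * R' a d b c) =
      ∑ a : Fin n, ∑ b : Fin n, R' a i b j * (η⁻¹ c b * η⁻¹ d a) := by
  have hdet : IsUnit η.det := (Matrix.isUnit_iff_isUnit_det η).mp hη
  set M : Matrix (Fin n × Fin n) (Fin n × Fin n) ℂ := toMat n R' with hM
  have hPM : (η ⊗ₖ η) * M.transpose = M * (η ⊗ₖ η) := by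
    ext ⟨p, q⟩ ⟨k, l⟩
    simp only [Matrix.mul_apply, ← Finset.univ_product_univ, Finset.sum_product,
      Matrix.kroneckerMap_apply, Matrix.transpose_apply, hM, toMat, Matrix.of_apply]
    rw [hcov p q k l]
    exact Finset.sum_congr rfl fun a _ => Finset.sum_congr rfl fun b _ => by ring
  have hQP : (η⁻¹ ⊗ₖ η⁻¹) * (η ⊗ₖ η) = 1 := by
    rw [← Matrix.mul_kronecker_mul, Matrix.nonsing_inv_mul _ hdet, Matrix.one_kronecker_one]
  have hPQ : (η ⊗ₖ η) * (η⁻¹ ⊗ₖ η⁻¹) = 1 := by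
    rw [← Matrix.mul_kronecker_mul, Matrix.mul_nonsing_inv _ hdet, Matrix.one_kronecker_one]
  have h2 : M.transpose * (η⁻¹ ⊗ₖ η⁻¹) = (η⁻¹ ⊗ₖ η⁻¹) * M := by
    have hM2 : M.transpose = (η⁻¹ ⊗ₖ η⁻¹) * M * (η ⊗ₖ η) := by
      rw [Matrix.mul_assoc, ← hPM, ← Matrix.mul_assoc, hQP, Matrix.one_mul]
    rw [hM2, Matrix.mul_assoc ((η⁻¹ ⊗ₖ η⁻¹) * M), hPQ, Matrix.mul_one]
  have h3 : (η⁻¹ ⊗ₖ η⁻¹).transpose * M = M.transpose * (η⁻¹ ⊗ₖ η⁻¹).transpose := by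
    have h := congrArg Matrix.transpose h2
    simp only [Matrix.transpose_mul, Matrix.transpose_transpose] at h
    exact h
  have h4 : ((η⁻¹ ⊗ₖ η⁻¹).transpose * M) (i, j) (d, c)
      = (M.transpose * (η⁻¹ ⊗ₖ η⁻¹).transpose) (i, j) (d, c) := by rw [h3]
  simp only [Matrix.mul_apply, ← Finset.univ_product_univ, Finset.sum_product,
    Matrix.kroneckerMap_apply, Matrix.transpose_apply, hM, toMat, Matrix.of_apply] at h4
  calc (∑ a : Fin n, ∑ b : Fin n, η⁻¹ a i * η⁻¹ b j * R' a d b c)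
      = ∑ a : Fin n, ∑ b : Fin n, η⁻¹ a i * η⁻¹ b j * R' a d b c := rfl
    _ = ∑ a : Fin n, ∑ b : Fin n, R' a i b j * (η⁻¹ d a * η⁻¹ c b) := h4
    _ = ∑ a : Fin n, ∑ b : Fin n, R' a i b j * (η⁻¹ c b * η⁻¹ d a) :=
        Finset.sum_congr rfl fun a _ => Finset.sum_congr rfl fun b _ => by ring

/-- The defining relation of the covector algebra, in the quotient. -/
lemma stmt19_xg_rel {n : ℕ} (R' : Fin n → Fin n → Fin n → Fin n → ℂ) (i j : Fin n) :
    xg n R' i * xg n R' j =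
      ∑ a : Fin n, ∑ b : Fin n, R' a i b j • (xg n R' b * xg n R' a) := by
  have h := RingQuot.mkAlgHom_rel ℂ (CovRel.rel (n := n) (R' := R') i j)
  simpa only [map_mul, map_sum, map_smul, xg] using h

/-- The defining relation of the vector algebra, in the quotient. -/
lemma stmt19_vg_rel {n : ℕ} (R' : Fin n → Fin n → Fin n → Fin n → ℂ) (i j : Fin n) :
    vg n R' i * vg n R' j =
      ∑ a : Fin n, ∑ b : Fin n, R' i a j b • (vg n R' b * vg n R' a) := by
  have h := RingQuot.mkAlgHom_rel ℂ (VecRel.rel (n := n) (R' := R') i j)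
  simpa only [map_mul, map_sum, map_smul, vg] using h

/-- Contraction of a pair of mutually inverse matrices. -/
lemma stmt19_contract {n : ℕ} {A : Type*} [Ring A] [Algebra ℂ A]
    (ζ ξ : Matrix (Fin n) (Fin n) ℂ) (h : ζ * ξ = 1) (w : Fin n → A) (i : Fin n) :
    (∑ a : Fin n, ξ a i • (∑ b : Fin n, ζ b a • w b)) = w i := by
  have : (∑ a : Fin n, ξ a i • (∑ b : Fin n, ζ b a • w b))
      = ∑ b : Fin n, ((ζ * ξ) b i) • w b := by
    simp only [Finset.smul_sum, smul_smul]
    rw [Finset.sum_comm]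
    refine Finset.sum_congr rfl fun b _ => ?_
    rw [← Finset.sum_smul, Matrix.mul_apply]
    congr 1
    exact Finset.sum_congr rfl fun a _ => by ring
  rw [this, h]
  simp [Matrix.one_apply]

/-- Extensionality for algebra maps out of the vector algebra. -/
lemma stmt19_vec_ext {n : ℕ} {R' : Fin n → Fin n → Fin n → Fin n → ℂ}
    {A : Type*} [Semiring A] [Algebra ℂ A] {φ ψ : VecAlg n R' →ₐ[ℂ] A}
    (h : ∀ i, φ (vg n R' i) = ψ (vg n R' i)) : φ = ψ := by
  have key : φ.comp (RingQuot.mkAlgHom ℂ (VecRel n R'))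
      = ψ.comp (RingQuot.mkAlgHom ℂ (VecRel n R')) :=
    FreeAlgebra.hom_ext (funext fun i => h i)
  refine DFunLike.ext _ _ fun x => ?_
  obtain ⟨y, rfl⟩ := RingQuot.mkAlgHom_surjective ℂ (VecRel n R') x
  exact DFunLike.congr_fun key y

/-- Extensionality for algebra maps out of the covector algebra. -/
lemma stmt19_cov_ext {n : ℕ} {R' : Fin n → Fin n → Fin n → Fin n → ℂ}
    {A : Type*} [Semiring A] [Algebra ℂ A] {φ ψ : CovAlg n R' →ₐ[ℂ] A}
    (h : ∀ i, φ (xg n R' i) = ψ (xg n R' i)) : φ = ψ := by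
  have key : φ.comp (RingQuot.mkAlgHom ℂ (CovRel n R'))
      = ψ.comp (RingQuot.mkAlgHom ℂ (CovRel n R')) :=
    FreeAlgebra.hom_ext (funext fun i => h i)
  refine DFunLike.ext _ _ fun x => ?_
  obtain ⟨y, rfl⟩ := RingQuot.mkAlgHom_surjective ℂ (CovRel n R') x
  exact DFunLike.congr_fun key y

end Stmt19Aux

/-- if `η` is an invertible `R'`-covariant matrix, there is a unique
ℂ-algebra isomorphism `V(R',R) → V̌(R',R)` sending `v^i` to `Σ_a x_a η^{ai}`. -/
theorem stmt19 (n : ℕ) (hn : 1 ≤ n)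
    (R R' : Fin n → Fin n → Fin n → Fin n → ℂ)
    (η : Matrix (Fin n) (Fin n) ℂ) (hη : IsUnit η)
    (hcov : MetricCovariant n R' η) :
    ∃! e : VecAlg n R' ≃ₐ[ℂ] CovAlg n R',
      ∀ i : Fin n, e (vg n R' i) = ∑ a : Fin n, η a i • xg n R' a := by
  have hdet : IsUnit η.det := (Matrix.isUnit_iff_isUnit_det η).mp hη
  -- forward algebra map
  let F : VecAlg n R' →ₐ[ℂ] CovAlg n R' := RingQuot.liftAlgHom ℂ
    ⟨FreeAlgebra.lift ℂ fun i => ∑ a : Fin n, η a i • xg n R' a, by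
      rintro x y ⟨i, j⟩
      simp only [map_mul, map_sum, map_smul, FreeAlgebra.lift_ι_apply]
      exact stmt19_expand (xg n R') (fun i a j b => R' a i b j)
        (fun i a j b => R' i a j b) η (fun i j => stmt19_xg_rel R' i j)
        (fun i j c d => stmt19_hcF R' η hcov i j c d) i j⟩
  -- backward algebra map
  let G : CovAlg n R' →ₐ[ℂ] VecAlg n R' := RingQuot.liftAlgHom ℂ
    ⟨FreeAlgebra.lift ℂ fun i => ∑ a : Fin n, η⁻¹ a i • vg n R' a, by
      rintro x y ⟨i, j⟩
      simp only [map_mul, map_sum, map_smul, FreeAlgebra.lift_ι_apply]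
      exact stmt19_expand (vg n R') (fun i a j b => R' i a j b)
        (fun i a j b => R' a i b j) η⁻¹ (fun i j => stmt19_vg_rel R' i j)
        (fun i j c d => stmt19_hcG R' η hη hcov i j c d) i j⟩
  have hF : ∀ i, F (vg n R' i) = ∑ a : Fin n, η a i • xg n R' a := fun i => by
    simp only [F, vg, RingQuot.liftAlgHom_mkAlgHom_apply, FreeAlgebra.lift_ι_apply]
  have hG : ∀ i, G (xg n R' i) = ∑ a : Fin n, η⁻¹ a i • vg n R' a := fun i => by
    simp only [G, xg, RingQuot.liftAlgHom_mkAlgHom_apply, FreeAlgebra.lift_ι_apply]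
  have hGF : G.comp F = AlgHom.id ℂ (VecAlg n R') := by
    refine stmt19_vec_ext fun i => ?_
    simp only [AlgHom.coe_comp, Function.comp_apply, AlgHom.id_apply, hF, map_sum, map_smul]
    simp only [hG]
    exact stmt19_contract η⁻¹ η (Matrix.nonsing_inv_mul _ hdet) (vg n R') i
  have hFG : F.comp G = AlgHom.id ℂ (CovAlg n R') := by
    refine stmt19_cov_ext fun i => ?_
    simp only [AlgHom.coe_comp, Function.comp_apply, AlgHom.id_apply, hG, map_sum, map_smul]
    simp only [hF]
    exact stmt19_contract η η⁻¹ (Matrix.mul_nonsing_inv _ hdet) (xg n R') i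
  refine ⟨AlgEquiv.ofAlgHom F G hFG hGF, fun i => hF i, ?_⟩
  intro e' he'
  have : e'.toAlgHom = F := stmt19_vec_ext fun i => by
    show e' (vg n R' i) = F (vg n R' i)
    rw [he' i, hF i]
  exact AlgEquiv.ext fun x => DFunLike.congr_fun this x
end
end
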